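/- (Fourier slice theorem) Let f : ℝ² → ℝ be integrable. Then for every ϑ ∈ ℝ the function t ↦ Rf(ϑ, t) is integrable on ℝ, and for every S ∈ ℝ one has ∫_ℝ Rf(ϑ, t) e^{−2πi t S} dt = 𝓕f(S cos ϑ, S sin ϑ), where 𝓕f(ξ) = ∫_{ℝ²} f(x) e^{−2πi ⟨x, ξ⟩} dx is the two-dimensional Fourier transform of f. -/
import Mathlib


noncomputable section

open MeasureTheory

/-- The Radon transform of `f : ℝ² → ℝ` (with the Bochner integral convention that
the integral of a non-integrable function is `0`). -/
def radon (f : ℝ × ℝ → ℝ) (θ t : ℝ) : ℝ :=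
  ∫ s : ℝ, f (t * Real.cos θ - s * Real.sin θ, t * Real.sin θ + s * Real.cos θ)

open Real in
/-- The two-dimensional Fourier transform of an integrable `f : ℝ² → ℝ`. -/
def fourier2 (f : ℝ × ℝ → ℝ) (ξ : ℝ × ℝ) : ℂ :=
  ∫ x : ℝ × ℝ, (f x : ℂ) * Complex.exp (-2 * π * Complex.I * (x.1 * ξ.1 + x.2 * ξ.2))

/-- Rotation by `θ` as a linear map on `ℝ × ℝ`. -/
def rotL (θ : ℝ) : ℝ × ℝ →ₗ[ℝ] ℝ × ℝ :=
  LinearMap.prod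
    (Real.cos θ • LinearMap.fst ℝ ℝ ℝ - Real.sin θ • LinearMap.snd ℝ ℝ ℝ)
    (Real.sin θ • LinearMap.fst ℝ ℝ ℝ + Real.cos θ • LinearMap.snd ℝ ℝ ℝ)

lemma rotL_apply (θ t s : ℝ) :
    rotL θ (t, s) = (t * Real.cos θ - s * Real.sin θ, t * Real.sin θ + s * Real.cos θ) := by
  simp [rotL, smul_eq_mul]
  constructor <;> ring

lemma rotL_det (θ : ℝ) : LinearMap.det (rotL θ) = 1 := by
  rw [← LinearMap.det_toMatrix (Module.Basis.finTwoProd ℝ), Matrix.det_fin_two]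
  simp [LinearMap.toMatrix_apply, rotL, Module.Basis.finTwoProd_zero, Module.Basis.finTwoProd_one]
  nlinarith [Real.sin_sq_add_cos_sq θ]

/-- Rotation by `θ` as a linear equivalence on `ℝ × ℝ`. -/
def rotE (θ : ℝ) : (ℝ × ℝ) ≃ₗ[ℝ] ℝ × ℝ :=
  LinearEquiv.ofLinear (rotL θ) (rotL (-θ))
    (by
      apply LinearMap.ext; rintro ⟨t, s⟩
      simp only [LinearMap.coe_comp, Function.comp_apply, LinearMap.id_coe, id_eq]
      rw [rotL_apply, rotL_apply]
      simp only [Real.cos_neg, Real.sin_neg, Prod.mk.injEq]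
      constructor
      · linear_combination t * (Real.sin_sq_add_cos_sq θ)
      · linear_combination s * (Real.sin_sq_add_cos_sq θ))
    (by
      apply LinearMap.ext; rintro ⟨t, s⟩
      simp only [LinearMap.coe_comp, Function.comp_apply, LinearMap.id_coe, id_eq]
      rw [rotL_apply, rotL_apply]
      simp only [Real.cos_neg, Real.sin_neg, Prod.mk.injEq]
      constructor
      · linear_combination t * (Real.sin_sq_add_cos_sq θ)
      · linear_combination s * (Real.sin_sq_add_cos_sq θ))

lemma rot_measurePreserving (θ : ℝ) :
    MeasurePreserving (rotL θ) (volume : Measure (ℝ × ℝ)) volume := by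
  refine ⟨(rotL θ).continuous_of_finiteDimensional.measurable, ?_⟩
  rw [Measure.map_linearMap_addHaar_eq_smul_addHaar volume (by rw [rotL_det]; norm_num)]
  simp [rotL_det]

lemma rot_measurableEmbedding (θ : ℝ) : MeasurableEmbedding (rotL θ) := by
  have h := ((rotE θ).toContinuousLinearEquiv.toHomeomorph).measurableEmbedding
  have : ⇑(rotE θ).toContinuousLinearEquiv.toHomeomorph = ⇑(rotL θ) := rfl
  rwa [this] at h

open Real in
theorem fourier_slice_theorem (f : ℝ × ℝ → ℝ) (hf : Integrable f) (θ : ℝ) :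
    Integrable (fun t : ℝ => radon f θ t) ∧
    ∀ S : ℝ,
      (∫ t : ℝ, (radon f θ t : ℂ) * Complex.exp (-2 * π * Complex.I * t * S)) =
        fourier2 f (S * Real.cos θ, S * Real.sin θ) := by
  set c := Real.cos θ with hc
  set d := Real.sin θ with hd
  -- the rotated function
  set g : ℝ × ℝ → ℝ := fun p => f (rotL θ p) with hg
  have hgI : Integrable g (volume : Measure (ℝ × ℝ)) :=
    ((rot_measurePreserving θ).integrable_comp hf.aestronglyMeasurable).mpr hf
  have hgI' : Integrable g ((volume : Measure ℝ).prod (volume : Measure ℝ)) := by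
    rwa [← Measure.volume_eq_prod]
  have hradon : ∀ t : ℝ, radon f θ t = ∫ s : ℝ, g (t, s) := by
    intro t
    unfold radon
    congr 1
    funext s
    show f (t * Real.cos θ - s * Real.sin θ, t * Real.sin θ + s * Real.cos θ) = f (rotL θ (t, s))
    rw [rotL_apply]
  constructor
  · have := hgI'.integral_prod_left
    refine this.congr ?_
    filter_upwards with t
    rw [hradon t]
  · intro S
    -- the integrand on the product space
    set H : ℝ × ℝ → ℂ := fun p => (g p : ℂ) * Complex.exp (-2 * π * Complex.I * p.1 * S)
      with hH
    have hHnorm : ∀ p : ℝ × ℝ, ‖H p‖ = ‖g p‖ := by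
      intro p
      rw [hH]
      simp only [norm_mul, Complex.norm_real]
      have : (-2 * ↑π * Complex.I * ↑p.1 * ↑S : ℂ) = ((-2 * π * p.1 * S : ℝ) : ℂ) * Complex.I := by
        push_cast; ring
      rw [this, Complex.norm_exp_ofReal_mul_I, mul_one]
    have hHmeas : AEStronglyMeasurable H (volume : Measure (ℝ × ℝ)) := by
      refine AEStronglyMeasurable.mul ?_ ?_
      · exact (Complex.continuous_ofReal.comp_aestronglyMeasurable hgI.aestronglyMeasurable)
      · exact (Complex.continuous_exp.comp (by continuity : Continuous fun p : ℝ × ℝ =>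
          (-2 * ↑π * Complex.I * ↑p.1 * ↑S : ℂ))).aestronglyMeasurable
    have hHI : Integrable H (volume : Measure (ℝ × ℝ)) := by
      refine ⟨hHmeas, ?_⟩
      have := hgI.norm.hasFiniteIntegral
      refine this.congr' ?_
      filter_upwards with p
      rw [← hHnorm p]
      simp
    have hHI' : Integrable H ((volume : Measure ℝ).prod (volume : Measure ℝ)) := by
      rwa [← Measure.volume_eq_prod]
    -- rewrite LHS as double integral
    have step1 : (∫ t : ℝ, (radon f θ t : ℂ) * Complex.exp (-2 * π * Complex.I * t * S)) =
        ∫ t : ℝ, ∫ s : ℝ, H (t, s) := by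
      congr 1
      funext t
      rw [hradon t, hH]
      simp only
      have : ((∫ s : ℝ, g (t, s) : ℝ) : ℂ) = ∫ s : ℝ, ((g (t, s) : ℝ) : ℂ) :=
        (integral_ofReal (𝕜 := ℂ)).symm
      rw [this, integral_mul_const]
    rw [step1]
    have step2 : (∫ t : ℝ, ∫ s : ℝ, H (t, s)) = ∫ p : ℝ × ℝ, H p := by
      rw [Measure.volume_eq_prod]
      exact integral_integral hHI'
    rw [step2]
    -- change of variables
    set K : ℝ × ℝ → ℂ := fun x =>
      (f x : ℂ) * Complex.exp (-2 * π * Complex.I * (x.1 * ((S * c : ℝ) : ℂ) + x.2 * ((S * d : ℝ) : ℂ))) with hK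
    have hHK : H = fun p => K (rotL θ p) := by
      funext p
      obtain ⟨t, s⟩ := p
      show ((f (rotL θ (t, s)) : ℝ) : ℂ) * Complex.exp (-2 * π * Complex.I * (t : ℂ) * (S : ℂ))
          = K (rotL θ (t, s))
      rw [rotL_apply]
      simp only [hK]
      congr 2
      have hr : (t * c - s * d) * (S * c) + (t * d + s * c) * (S * d) = t * S := by
        rw [hc, hd]
        linear_combination (t * S) * (Real.sin_sq_add_cos_sq θ)
      rw [show (((t * c - s * d : ℝ) : ℂ) * ((S * c : ℝ) : ℂ) + ((t * d + s * c : ℝ) : ℂ) * ((S * d : ℝ) : ℂ))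
          = (((t * c - s * d) * (S * c) + (t * d + s * c) * (S * d) : ℝ) : ℂ) by push_cast; ring]
      rw [hr]
      push_cast
      ring
    rw [hHK, (rot_measurePreserving θ).integral_comp (rot_measurableEmbedding θ) K]
    rw [hK]
    unfold fourier2
    rfl
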